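/- arXiv:2005.02224 — 2 statements merged into one kernel-verified Lean document; each statement's English description precedes it below -/
import Mathlib

section
/- Let V ∈ ℂ^{n,n} be H-unitary and X ∈ ℂ^{n,n} with VX = XV. Then there exists an H-unitary matrix U ∈ ℂ^{n,n} such that V = U² and UX = XU. -/
/-!
Take `U = p(V)`, where the polynomial `p` satisfies `p(V)² = V` and `p(λ) = √λ` (principal
branch) at every eigenvalue `λ`: it is glued by the Chinese remainder theorem from Newton
iterates of `√λ` modulo the powers of `X - λ`. As a polynomial in `V`, `U` commutes with `X`.
Since `V^{[*]} = V⁻¹ = q(V)` for a polynomial `q`, also `U^{[*]} = p̄(q(V))` is a polynomial in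
`V`, so `E = U^{[*]} U` satisfies `E² = V^{[*]} V = 1`. The spectrum of an `H`-unitary matrix is
closed under `λ ↦ 1/λ̄`, and `√(1/λ̄) = 1/conj √λ` for the principal branch, so every eigenvalue
of `E` is `conj (√(1/λ̄)) √λ = 1`. Hence `1 + E` is invertible, and `E² = 1` forces `E = 1`.
-/

open Polynomial ComplexConjugate Function
open scoped Real

namespace Complex

lemma sqrt_mul_self (z : ℂ) : sqrt z * sqrt z = z := by
  simpa [sq, sqrt] using cpow_nat_inv_pow z two_ne_zero

lemma sqrt_ne_zero {z : ℂ} (hz : z ≠ 0) : sqrt z ≠ 0 := fun h =>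
  hz (by rw [← sqrt_mul_self z, h, zero_mul])

lemma arg_conj_eq_pi_iff (z : ℂ) : (conj z).arg = π ↔ z.arg = π := by
  rw [arg_conj]
  split_ifs with h
  · simp [h]
  · simp only [h, iff_false]
    linarith [neg_pi_lt_arg z]

lemma sqrt_inv_conj (z : ℂ) : sqrt (conj z)⁻¹ = (conj (sqrt z))⁻¹ := by
  unfold sqrt
  by_cases h : z.arg = π
  · have hz : conj z = z := conj_eq_iff_im.mpr (arg_eq_pi_iff.mp h).2
    rw [inv_cpow_eq_ite, if_pos ((arg_conj_eq_pi_iff z).mpr h), hz]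
    simp [conj_ofNat]
  · rw [inv_cpow _ _ (mt (arg_conj_eq_pi_iff z).mp h), conj_cpow _ _ h]
    simp [conj_ofNat]

end Complex

lemma exists_forall_dvd_sub {R ι : Type*} [CommRing R] [Finite ι] {q : ι → R}
    (hq : Pairwise (IsCoprime on q)) (x : ι → R) : ∃ r, ∀ i, q i ∣ r - x i := by
  simpa only [Ideal.mem_span_singleton] using Ideal.exists_forall_sub_mem_ideal
    (I := fun i => Ideal.span {q i})
    (fun i j hij => (Ideal.isCoprime_span_singleton_iff _ _).mpr (hq hij)) x

namespace Polynomial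

section Field

variable {K : Type*} [Field K]

lemma exists_eval_eq_and_X_sub_C_pow_dvd_mul_self_sub_X [NeZero (2 : K)] {a s : K}
    (hs : s * s = a) (hs0 : s ≠ 0) (m : ℕ) :
    ∃ u : K[X], u.eval a = s ∧ (X - C a) ^ (m + 1) ∣ u * u - X := by
  induction m with
  | zero => exact ⟨C s, by simp, -1, by rw [← C_mul, hs]; ring⟩
  | succ m ih =>
    obtain ⟨u, hu, g, hg⟩ := ih
    -- Newton step: `u - c (X - a)^(m+1)` with `c = g(a) / 2s` kills the next Taylor coefficient.
    set c := g.eval a / (2 * s)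
    obtain ⟨w, hw⟩ : X - C a ∣ g - 2 * C c * u + C c * C c * (X - C a) ^ (m + 1) := by
      rw [dvd_iff_isRoot]
      simp only [IsRoot, eval_add, eval_sub, eval_mul, eval_pow, eval_ofNat, eval_C, eval_X, hu,
        sub_self, zero_pow m.succ_ne_zero, mul_zero, c]
      field_simp
      ring
    refine ⟨u - C c * (X - C a) ^ (m + 1), by simp [hu], w, ?_⟩
    linear_combination hg + (X - C a) ^ (m + 1) * hw

lemma exists_dvd_mul_self_sub_X [NeZero (2 : K)] {f : K[X]} (hf : f.Splits)
    (h0 : ¬ f.IsRoot 0) (s : K → K) (hs : ∀ a, f.IsRoot a → s a * s a = a) :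
    ∃ p : K[X], f ∣ p * p - X ∧ ∀ a, f.IsRoot a → p.eval a = s a := by
  classical
  have hf0 : f ≠ 0 := by rintro rfl; simp at h0
  set S := f.roots.toFinset
  have hS : ∀ a, a ∈ S ↔ f.IsRoot a := fun a => by simp [S, mem_roots hf0]
  let q : K → K[X] := fun a => (X - C a) ^ f.rootMultiplicity a
  have hq : Pairwise (IsCoprime on q) := fun a b hab =>
    (isCoprime_X_sub_C_of_isUnit_sub (sub_ne_zero.mpr hab).isUnit).pow
  have hlocal : ∀ a : S, ∃ u : K[X], u.eval (a : K) = s a ∧ q a ∣ u * u - X := by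
    rintro ⟨a, ha⟩
    rw [hS] at ha
    have hsa0 : s a ≠ 0 := left_ne_zero_of_mul (by rw [hs a ha]; rintro rfl; exact h0 ha)
    have hm := Nat.sub_add_cancel ((rootMultiplicity_pos hf0).mpr ha)
    simpa only [q, hm] using
      exists_eval_eq_and_X_sub_C_pow_dvd_mul_self_sub_X (hs a ha) hsa0 (f.rootMultiplicity a - 1)
  choose u hu using hlocal
  obtain ⟨p, hp⟩ := exists_forall_dvd_sub (q := fun a : S => q a)
    (fun a b hab => hq (Subtype.coe_ne_coe.mpr hab)) u
  refine ⟨p, ?_, fun a ha => ?_⟩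
  · have hf_eq : f = C f.leadingCoeff * ∏ a ∈ S, q a := by
      rw [← prod_multiset_root_eq_finset_root]; exact hf.eq_prod_roots
    rw [hf_eq, C_mul_dvd (leadingCoeff_ne_zero.mpr hf0)]
    refine Finset.prod_dvd_of_coprime (hq.set_pairwise _) fun a ha => ?_
    have hsplit : p * p - X =
        (p - u ⟨a, ha⟩) * (p + u ⟨a, ha⟩) + (u ⟨a, ha⟩ * u ⟨a, ha⟩ - X) := by
      ring
    rw [hsplit]
    exact dvd_add ((hp ⟨a, ha⟩).mul_right _) (hu ⟨a, ha⟩).2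
  · have ha' : a ∈ S := (hS a).mpr ha
    have hroot : X - C a ∣ p - u ⟨a, ha'⟩ :=
      (dvd_pow_self _ ((rootMultiplicity_pos hf0).mpr ha).ne').trans (hp ⟨a, ha'⟩)
    rw [dvd_iff_isRoot, IsRoot, eval_sub, sub_eq_zero] at hroot
    exact hroot.trans (hu ⟨a, ha'⟩).1

lemma exists_dvd_X_mul_sub_one {f : K[X]} (h0 : ¬ f.IsRoot 0) : ∃ q : K[X], f ∣ X * q - 1 := by
  obtain ⟨a, b, hab⟩ : IsCoprime X f :=
    irreducible_X.coprime_iff_not_dvd.mpr (by rwa [X_dvd_iff, coeff_zero_eq_eval_zero])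
  exact ⟨a, -b, by linear_combination hab⟩

end Field

variable {R A : Type*} [CommSemiring R]

lemma star_aeval [StarRing R] [Semiring A] [StarRing A] [Algebra R A] [StarModule R A]
    (a : A) (p : R[X]) : star (aeval a p) = aeval (star a) (p.map (starRingEnd R)) := by
  induction p using Polynomial.induction_on' with
  | add p q hp hq => simp only [map_add, star_add, Polynomial.map_add, hp, hq]
  | monomial k r =>
    simp only [aeval_monomial, map_monomial, star_mul, star_pow, starRingEnd_apply,
      ← algebraMap_star_comm]
    exact (Algebra.commutes (star r) (star a ^ k)).symm

lemma aeval_units_conj [Semiring A] [Algebra R A] (u : Aˣ) (a : A) (p : R[X]) :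
    aeval (↑u⁻¹ * a * u) p = ↑u⁻¹ * aeval a p * u := by
  simpa [ConjAct.units_smul_def] using
    aeval_algHom_apply (MulSemiringAction.toAlgHom R A (ConjAct.toConjAct u⁻¹)) a p

end Polynomial

lemma aeval_eq_one_of_mul_self_eq_one {𝕜 A : Type*} [Field 𝕜] [IsAlgClosed 𝕜] [NeZero (2 : 𝕜)]
    [Ring A] [Algebra 𝕜 A] [FiniteDimensional 𝕜 A] {a : A} {P : 𝕜[X]}
    (hsq : aeval a P * aeval a P = 1) (hP : ∀ μ ∈ spectrum 𝕜 a, P.eval μ = 1) :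
    aeval a P = 1 := by
  nontriviality A
  have hneg : (-1 : 𝕜) ∉ spectrum 𝕜 (aeval a P) := by
    rw [spectrum.map_polynomial_aeval_of_nonempty a P
      (spectrum.nonempty_of_isAlgClosed_of_finiteDimensional 𝕜 a)]
    rintro ⟨μ, hμ, h : P.eval μ = -1⟩
    rw [hP μ hμ] at h
    exact two_ne_zero (by linear_combination h : (2 : 𝕜) = 0)
  have hunit : IsUnit (1 + aeval a P) := by
    rw [spectrum.mem_iff, not_not, map_neg, map_one] at hneg
    simpa [add_comm] using hneg.neg
  have hzero : (aeval a P - 1) * (1 + aeval a P) = 0 := by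
    calc (aeval a P - 1) * (1 + aeval a P) = aeval a P * aeval a P - 1 := by noncomm_ring
      _ = 0 := by rw [hsq, sub_self]
  exact sub_eq_zero.mp (hunit.mul_left_eq_zero.mp hzero)

namespace Matrix

variable {ι : Type*} [Fintype ι] [DecidableEq ι]

lemma exists_aeval_eq_inv {K : Type*} [Field K] {A : Matrix ι ι K} (hA : IsUnit A) :
    ∃ q : K[X], aeval A q = A⁻¹ ∧ ∀ μ ∈ spectrum K A, q.eval μ = μ⁻¹ := by
  have h0 : ¬ A.charpoly.IsRoot 0 :=
    mem_spectrum_iff_isRoot_charpoly.not.mp ((spectrum.zero_notMem_iff K).mpr hA)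
  obtain ⟨q, hq⟩ := exists_dvd_X_mul_sub_one h0
  refine ⟨q, ?_, fun μ hμ => ?_⟩
  · have := aeval_eq_zero_of_dvd_aeval_eq_zero hq (aeval_self_charpoly A)
    rw [map_sub, map_mul, aeval_X, map_one, sub_eq_zero] at this
    exact (inv_eq_right_inv this).symm
  · have := (dvd_iff_isRoot.mpr (mem_spectrum_iff_isRoot_charpoly.mp hμ)).trans hq
    rw [dvd_iff_isRoot, IsRoot, eval_sub, eval_mul, eval_X, eval_one, sub_eq_zero] at this
    exact eq_inv_of_mul_eq_one_right this

lemma exists_aeval_mul_self_eq {K : Type*} [Field K] [NeZero (2 : K)] {A : Matrix ι ι K}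
    (hA : IsUnit A) (hχ : A.charpoly.Splits) (s : K → K)
    (hs : ∀ μ ∈ spectrum K A, s μ * s μ = μ) :
    ∃ p : K[X], aeval A p * aeval A p = A ∧ ∀ μ ∈ spectrum K A, p.eval μ = s μ := by
  simp only [mem_spectrum_iff_isRoot_charpoly] at hs ⊢
  have h0 : ¬ A.charpoly.IsRoot 0 :=
    mem_spectrum_iff_isRoot_charpoly.not.mp ((spectrum.zero_notMem_iff K).mpr hA)
  obtain ⟨p, hp, hps⟩ := exists_dvd_mul_self_sub_X hχ h0 s hs
  refine ⟨p, ?_, hps⟩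
  have := aeval_eq_zero_of_dvd_aeval_eq_zero hp (aeval_self_charpoly A)
  rwa [map_sub, map_mul, aeval_X, sub_eq_zero] at this

noncomputable def hAdjoint (H A : Matrix ι ι ℂ) : Matrix ι ι ℂ := H⁻¹ * Aᴴ * H

variable {H : Matrix ι ι ℂ}

lemma hAdjoint_mul (hH : IsUnit H.det) (A B : Matrix ι ι ℂ) :
    hAdjoint H (A * B) = hAdjoint H B * hAdjoint H A := by
  simp only [hAdjoint, conjTranspose_mul, mul_assoc, mul_nonsing_inv_cancel_left _ _ hH]

lemma hAdjoint_eq_units_conj (u : (Matrix ι ι ℂ)ˣ) (A : Matrix ι ι ℂ) :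
    hAdjoint u A = (↑u⁻¹ : Matrix ι ι ℂ) * star A * u := by
  rw [hAdjoint, coe_units_inv, star_eq_conjTranspose]

lemma hAdjoint_aeval (hH : IsUnit H.det) (A : Matrix ι ι ℂ) (p : ℂ[X]) :
    hAdjoint H (aeval A p) = aeval (hAdjoint H A) (p.map (starRingEnd ℂ)) := by
  obtain ⟨u, rfl⟩ := (isUnit_iff_isUnit_det H).mpr hH
  rw [hAdjoint_eq_units_conj, hAdjoint_eq_units_conj, star_aeval, aeval_units_conj]

lemma spectrum_hAdjoint (hH : IsUnit H.det) (A : Matrix ι ι ℂ) :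
    spectrum ℂ (hAdjoint H A) = star (spectrum ℂ A) := by
  obtain ⟨u, rfl⟩ := (isUnit_iff_isUnit_det H).mpr hH
  rw [hAdjoint_eq_units_conj, spectrum.units_conjugate', spectrum.map_star]

lemma inv_conj_mem_spectrum_of_hAdjoint_mul_eq_one (hH : IsUnit H.det) {V : Matrix ι ι ℂ}
    (hV : hAdjoint H V * V = 1) {μ : ℂ} (hμ : μ ∈ spectrum ℂ V) :
    (conj μ)⁻¹ ∈ spectrum ℂ V := by
  let v : (Matrix ι ι ℂ)ˣ := ⟨V, hAdjoint H V, mul_eq_one_comm.mp hV, hV⟩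
  have hinv : (spectrum ℂ V)⁻¹ = spectrum ℂ (hAdjoint H V) := spectrum.map_inv v
  rw [← Set.mem_inv, hinv, spectrum_hAdjoint hH]
  exact Set.star_mem_star.mpr hμ

end Matrix

open Matrix

theorem hUnitary_sqrt_commuting_general {n : ℕ}
    (H V X : Matrix (Fin n) (Fin n) ℂ) (hdet : IsUnit H.det)
    (hV : H⁻¹ * Vᴴ * H * V = 1) (hcomm : V * X = X * V) :
    ∃ U : Matrix (Fin n) (Fin n) ℂ,
      H⁻¹ * Uᴴ * H * U = 1 ∧ V = U * U ∧ U * X = X * U := by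
  change hAdjoint H V * V = 1 at hV
  have hVunit : IsUnit V := IsUnit.of_mul_eq_one_right _ hV
  obtain ⟨q, hqV, hq⟩ := exists_aeval_eq_inv hVunit
  rw [inv_eq_left_inv hV] at hqV
  obtain ⟨p, hpV, hp⟩ := exists_aeval_mul_self_eq hVunit (IsAlgClosed.splits _) Complex.sqrt
    fun μ _ => μ.sqrt_mul_self
  set U := aeval V p
  have hUX : Commute U X := (Algebra.commute_of_mem_adjoin_singleton_of_commute
    (aeval_mem_adjoin_singleton ℂ V) hcomm.symm).symm
  have hUadj : hAdjoint H U = aeval V ((p.map (starRingEnd ℂ)).comp q) := by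
    rw [hAdjoint_aeval hdet, aeval_comp, hqV]
  have hUcomm : Commute U (hAdjoint H U) := by
    rw [hUadj]; exact (Commute.all _ _).map (aeval V)
  refine ⟨U, ?_, hpV.symm, hUX.eq⟩
  change hAdjoint H U * U = 1
  rw [hUadj, ← map_mul]
  apply aeval_eq_one_of_mul_self_eq_one
  · rw [map_mul, ← hUadj, hUcomm.mul_mul_mul_comm, ← hAdjoint_mul hdet, hpV, hV]
  · intro μ hμ
    have hμ0 : μ ≠ 0 := ne_of_mem_of_not_mem hμ ((spectrum.zero_notMem_iff ℂ).mpr hVunit)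
    rw [eval_mul, eval_comp, hq μ hμ, show μ⁻¹ = conj (conj μ)⁻¹ by simp, eval_map,
      eval₂_at_apply, hp _ (inv_conj_mem_spectrum_of_hAdjoint_mul_eq_one hdet hV hμ),
      Complex.sqrt_inv_conj, hp μ hμ, map_inv₀, Complex.conj_conj,
      inv_mul_cancel₀ (Complex.sqrt_ne_zero hμ0)]

/-- An H-unitary matrix commuting with X has an H-unitary square root commuting with X. -/
theorem hUnitary_sqrt_commuting {n : ℕ}
    (H V X : Matrix (Fin n) (Fin n) ℂ) (hH : H.IsHermitian) (hdet : IsUnit H.det)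
    (hV : H⁻¹ * Vᴴ * H * V = 1) (hcomm : V * X = X * V) :
    ∃ U : Matrix (Fin n) (Fin n) ℂ,
      H⁻¹ * Uᴴ * H * U = 1 ∧ V = U * U ∧ U * X = X * U :=
  hUnitary_sqrt_commuting_general H V X hdet hV hcomm
end

section
/- Let A ∈ ℝ^{n,n} be H-selfadjoint. Then there exists a nonsingular T ∈ ℝ^{n,n} such that T^{-1}AT = diag(A_1, A_0) and T^T H T = diag(H_1, H_0) (block diagonal with matching block sizes), where A_1 is nonsingular and A_0 is nilpotent. -/
/-!
Fitting decomposition: for `m` large, `ℝⁿ = range Aᵐ ⊕ ker Aᵐ`, both summands are `A`-invariant,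
`A` is invertible on the first and nilpotent on the second. Since `A` is `H`-selfadjoint, so is
`Aᵐ`, hence `H(Aᵐ x, y) = H(x, Aᵐ y)` and `H(y, Aᵐ x) = H(Aᵐ y, x)` vanish when `Aᵐ y = 0`: the
summands are `H`-orthogonal in both orders. Writing `A` and `H` in a basis adapted to the
decomposition therefore block-diagonalises both at once.
-/

open Matrix

namespace LinearMap.IsAdjointPair

variable {R M N : Type*} [CommSemiring R] [AddCommMonoid M] [Module R M] [AddCommMonoid N]
  [Module R N] {B : M →ₗ[R] M →ₗ[R] N} {f : Module.End R M}

theorem pow (h : IsAdjointPair B B f f) (m : ℕ) : IsAdjointPair B B ⇑(f ^ m) ⇑(f ^ m) := by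
  induction m with
  | zero => exact isAdjointPair_one
  | succ m ih => simpa only [← pow_succ, ← pow_succ'] using ih.mul h

theorem apply_eq_zero_of_mem_range_of_mem_ker (h : IsAdjointPair B B f f) {x y : M}
    (hx : x ∈ range f) (hy : y ∈ ker f) : B x y = 0 := by
  obtain ⟨z, rfl⟩ := hx
  rw [h, mem_ker.mp hy, map_zero]

theorem apply_eq_zero_of_mem_ker_of_mem_range (h : IsAdjointPair B B f f) {x y : M}
    (hx : x ∈ ker f) (hy : y ∈ range f) : B x y = 0 := by
  obtain ⟨z, rfl⟩ := hy
  rw [← h, mem_ker.mp hx, map_zero, zero_apply]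

end LinearMap.IsAdjointPair

namespace Module.End

variable {R M : Type*} [Semiring R] [AddCommMonoid M] [Module R M] (f : Module.End R M)

theorem mapsTo_range_pow (m : ℕ) :
    ∀ x ∈ LinearMap.range (f ^ m), f x ∈ LinearMap.range (f ^ m) := by
  rintro _ ⟨y, rfl⟩
  exact ⟨f y, by rw [← mul_apply, ← pow_succ, pow_succ', mul_apply]⟩

theorem mapsTo_ker_pow (m : ℕ) : ∀ x ∈ LinearMap.ker (f ^ m), f x ∈ LinearMap.ker (f ^ m) := by
  intro x hx
  rw [LinearMap.mem_ker, ← mul_apply, ← pow_succ, pow_succ', mul_apply, LinearMap.mem_ker.mp hx,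
    map_zero]

theorem isNilpotent_restrict_ker_pow (m : ℕ) : IsNilpotent (f.restrict (f.mapsTo_ker_pow m)) :=
  ⟨m, LinearMap.ext fun x => Subtype.ext <| by
    rw [pow_restrict, LinearMap.coe_restrict_apply]
    exact x.2⟩

theorem ker_restrict_range_pow_eq_bot {m : ℕ}
    (h : Disjoint (LinearMap.ker (f ^ (m + 1))) (LinearMap.range (f ^ (m + 1)))) :
    LinearMap.ker (f.restrict (f.mapsTo_range_pow (m + 1))) = ⊥ := by
  refine (Submodule.eq_bot_iff _).mpr fun x hx => Subtype.ext ?_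
  have hfx : f x = 0 := congrArg Subtype.val hx
  have hx' : (x : M) ∈ LinearMap.ker (f ^ (m + 1)) := by simp [pow_succ, hfx]
  exact (Submodule.disjoint_def.mp h) x hx' x.2

end Module.End

namespace Module.Basis

variable {R M ι κ : Type*} [CommRing R] [AddCommGroup M] [Module R M] {p q : Submodule R M}

noncomputable def ofIsCompl (h : IsCompl p q) (bp : Basis ι R p) (bq : Basis κ R q) :
    Basis (ι ⊕ κ) R M :=
  (bp.prod bq).map (Submodule.prodEquivOfIsCompl p q h)

variable (h : IsCompl p q) (bp : Basis ι R p) (bq : Basis κ R q)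

@[simp]
theorem ofIsCompl_inl (i : ι) : ofIsCompl h bp bq (Sum.inl i) = bp i := by
  simp [ofIsCompl]

@[simp]
theorem ofIsCompl_inr (i : κ) : ofIsCompl h bp bq (Sum.inr i) = bq i := by
  simp [ofIsCompl]

variable [Fintype ι] [DecidableEq ι] [Fintype κ] [DecidableEq κ]

theorem toMatrix_ofIsCompl (f : Module.End R M) (hp : ∀ x ∈ p, f x ∈ p)
    (hq : ∀ x ∈ q, f x ∈ q) :
    LinearMap.toMatrix (ofIsCompl h bp bq) (ofIsCompl h bp bq) f =
      fromBlocks (LinearMap.toMatrix bp bp (f.restrict hp)) 0 0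
        (LinearMap.toMatrix bq bq (f.restrict hq)) := by
  have hconj : (Submodule.prodEquivOfIsCompl p q h).symm.toLinearMap ∘ₗ f ∘ₗ
      (Submodule.prodEquivOfIsCompl p q h).toLinearMap =
        (f.restrict hp).prodMap (f.restrict hq) := by
    ext x <;> simp [hp, hq]
  rw [← LinearMap.toMatrix_prodMap, ← hconj]
  rfl

theorem bilinForm_toMatrix_ofIsCompl (B : LinearMap.BilinForm R M)
    (hpq : ∀ x ∈ p, ∀ y ∈ q, B x y = 0) (hqp : ∀ x ∈ q, ∀ y ∈ p, B x y = 0) :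
    LinearMap.BilinForm.toMatrix (ofIsCompl h bp bq) B =
      fromBlocks (LinearMap.BilinForm.toMatrix bp (B.restrict p)) 0 0
        (LinearMap.BilinForm.toMatrix bq (B.restrict q)) := by
  ext (i | i) (j | j) <;> simp [LinearMap.BilinForm.toMatrix_apply, hpq, hqp]

end Module.Basis

section Reindex

variable {R M ι κ : Type*} [CommRing R] [AddCommGroup M] [Module R M]
  [Fintype ι] [DecidableEq ι] [Fintype κ] [DecidableEq κ] (b : Module.Basis κ R M) (e : κ ≃ ι)

theorem LinearMap.toMatrix_reindex (f : Module.End R M) :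
    LinearMap.toMatrix (b.reindex e) (b.reindex e) f =
      (LinearMap.toMatrix b b f).submatrix e.symm e.symm := by
  ext i j
  simp [LinearMap.toMatrix_apply]

theorem LinearMap.BilinForm.toMatrix_reindex (B : LinearMap.BilinForm R M) :
    LinearMap.BilinForm.toMatrix (b.reindex e) B =
      (LinearMap.BilinForm.toMatrix b B).submatrix e.symm e.symm := by
  ext i j
  simp [LinearMap.BilinForm.toMatrix_apply]

end Reindex

section ChangeOfBasis

variable {R ι : Type*} [CommRing R] [Fintype ι] [DecidableEq ι]

theorem Matrix.isSelfAdjoint_of_inv_mul_transpose_mul_eq {H A : Matrix ι ι R}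
    (hH : IsUnit H.det) (hA : H⁻¹ * Aᵀ * H = A) : Matrix.IsSelfAdjoint H A := by
  change Aᵀ * H = H * A
  conv_rhs => rw [← hA, Matrix.mul_assoc, mul_nonsing_inv_cancel_left _ _ hH]

variable (b : Module.Basis ι R (ι → R))

theorem Module.Basis.inv_mul_mul_basisFun_toMatrix (A : Matrix ι ι R) :
    ((Pi.basisFun R ι).toMatrix b)⁻¹ * A * (Pi.basisFun R ι).toMatrix b =
      LinearMap.toMatrix b b (toLin' A) := by
  conv_lhs => rw [← LinearMap.toMatrix'_toLin' A, ← LinearMap.toMatrix_eq_toMatrix']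
  rw [inv_eq_left_inv (b.toMatrix_mul_toMatrix_flip _),
    basis_toMatrix_mul_linearMap_toMatrix_mul_basis_toMatrix]

theorem Module.Basis.transpose_mul_mul_basisFun_toMatrix (H : Matrix ι ι R) :
    ((Pi.basisFun R ι).toMatrix b)ᵀ * H * (Pi.basisFun R ι).toMatrix b =
      LinearMap.BilinForm.toMatrix b (toBilin' H) := by
  rw [← LinearMap.BilinForm.toMatrix_mul_basis_toMatrix (Pi.basisFun R ι),
    LinearMap.BilinForm.toMatrix_basisFun, LinearMap.BilinForm.toMatrix'_toBilin']

end ChangeOfBasis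

theorem hSelfadjoint_block_decomposition_general {n : ℕ}
    (H A : Matrix (Fin n) (Fin n) ℝ) (hdet : IsUnit H.det)
    (hA : H⁻¹ * Aᵀ * H = A) :
    ∃ (k l : ℕ) (e : Fin n ≃ (Fin k ⊕ Fin l)) (T : Matrix (Fin n) (Fin n) ℝ)
      (A₁ H₁ : Matrix (Fin k) (Fin k) ℝ) (A₀ H₀ : Matrix (Fin l) (Fin l) ℝ),
      IsUnit T.det ∧ IsUnit A₁.det ∧ IsNilpotent A₀ ∧
      T⁻¹ * A * T = (Matrix.fromBlocks A₁ 0 0 A₀).submatrix e e ∧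
      Tᵀ * H * T = (Matrix.fromBlocks H₁ 0 0 H₀).submatrix e e := by
  set f : Module.End ℝ (Fin n → ℝ) := toLin' A
  have hf : LinearMap.IsAdjointPair (toBilin' H) (toBilin' H) f f :=
    (isAdjointPair_toLinearMap₂' H H A A).mpr (isSelfAdjoint_of_inv_mul_transpose_mul_eq hdet hA)
  obtain ⟨N, hN⟩ := Filter.eventually_atTop.mp f.eventually_isCompl_ker_pow_range_pow
  have hcompl := hN (N + 1) N.le_succ
  set bp := Module.finBasis ℝ (LinearMap.range (f ^ (N + 1)))
  set bq := Module.finBasis ℝ (LinearMap.ker (f ^ (N + 1)))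
  set b := Module.Basis.ofIsCompl hcompl.symm bp bq
  set e := (Pi.basisFun ℝ (Fin n)).indexEquiv b
  refine ⟨_, _, e, (Pi.basisFun ℝ (Fin n)).toMatrix (b.reindex e.symm),
    LinearMap.toMatrix bp bp (f.restrict (f.mapsTo_range_pow _)),
    LinearMap.BilinForm.toMatrix bp ((toBilin' H).restrict _),
    LinearMap.toMatrix bq bq (f.restrict (f.mapsTo_ker_pow _)),
    LinearMap.BilinForm.toMatrix bq ((toBilin' H).restrict _), ?_, ?_, ?_, ?_, ?_⟩
  · exact isUnit_det_of_left_inverse ((b.reindex e.symm).toMatrix_mul_toMatrix_flip _)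
  · rw [LinearMap.det_toMatrix]
    exact LinearMap.isUnit_det _ <|
      (LinearMap.isUnit_iff_ker_eq_bot _).mpr (f.ker_restrict_range_pow_eq_bot hcompl.disjoint)
  · exact (f.isNilpotent_restrict_ker_pow _).map (LinearMap.toMatrixAlgEquiv bq)
  · rw [Module.Basis.inv_mul_mul_basisFun_toMatrix, LinearMap.toMatrix_reindex, Equiv.symm_symm,
      Module.Basis.toMatrix_ofIsCompl]
  · rw [Module.Basis.transpose_mul_mul_basisFun_toMatrix, LinearMap.BilinForm.toMatrix_reindex,
      Equiv.symm_symm, Module.Basis.bilinForm_toMatrix_ofIsCompl]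
    · exact fun x hx y hy => (hf.pow _).apply_eq_zero_of_mem_range_of_mem_ker hx hy
    · exact fun x hx y hy => (hf.pow _).apply_eq_zero_of_mem_ker_of_mem_range hx hy

/-- An H-selfadjoint real matrix can be simultaneously block-diagonalised with H,
with a nonsingular block and a nilpotent block. -/
theorem hSelfadjoint_block_decomposition {n : ℕ}
    (H A : Matrix (Fin n) (Fin n) ℝ) (hH : Hᵀ = H) (hdet : IsUnit H.det)
    (hA : H⁻¹ * Aᵀ * H = A) :
    ∃ (k l : ℕ) (e : Fin n ≃ (Fin k ⊕ Fin l)) (T : Matrix (Fin n) (Fin n) ℝ)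
      (A₁ H₁ : Matrix (Fin k) (Fin k) ℝ) (A₀ H₀ : Matrix (Fin l) (Fin l) ℝ),
      IsUnit T.det ∧ IsUnit A₁.det ∧ IsNilpotent A₀ ∧
      T⁻¹ * A * T = (Matrix.fromBlocks A₁ 0 0 A₀).submatrix e e ∧
      Tᵀ * H * T = (Matrix.fromBlocks H₁ 0 0 H₀).submatrix e e :=
  hSelfadjoint_block_decomposition_general H A hdet hA
end
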